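/- Let S₀ ⊆ ℤ_{≥0}^J be a finite schedule set containing 0 with convex hull ⟨S₀⟩, α > 0, g_j : ℝ_{≥0} → ℝ strictly concave continuous. Let (q^{(c)}) be a sequence in ℤ_{≥0}^J with ‖q^{(c)}‖₁ = c and q^{(c)}/c → q. Define σ̂(q^{(c)}) as any maximizer of Σ_j g_j(s_j) (q_j^{(c)})^α over ⟨S₀ ∧ q^{(c)}⟩, and σ*(q) as the maximizer over ⟨S₀⟩. Then for every j with q_j > 0, σ̂_j(q^{(c)}) → σ*_j(q) as c → ∞. -/

import Mathlib

open Filter Topology Set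

/-!
Every schedule value is at most some `M`, and every coordinate `j` with `q j > 0` has
`q^{(c)}_j → ∞`; once `q^{(c)}_j ≥ M` the truncation `σ ∧ q^{(c)}` does not touch that
coordinate. Hence `σ̂(q^{(c)})` agrees, on those coordinates, with a point `u_c` of `⟨S₀⟩`, and
`σ*(q)` agrees with a point of `⟨S₀ ∧ q^{(c)}⟩`. Dividing the weights by `c^α`, they converge to
`q^α`, which vanishes off those coordinates, so `u_c` is an almost maximizer of the limiting
objective on the compact set `⟨S₀⟩`. Every limit point of `u_c` is then a maximizer, and strict
concavity pins down the maximizer in every coordinate of positive weight.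
-/

section WeightedUtility

variable {J : Type*} [Fintype J]

def weightedUtility (g : J → ℝ → ℝ) (w x : J → ℝ) : ℝ := ∑ j, g j (x j) * w j

variable {g : J → ℝ → ℝ}

lemma weightedUtility_congr {w x y : J → ℝ} (h : ∀ j, w j ≠ 0 → x j = y j) :
    weightedUtility g w x = weightedUtility g w y := by
  refine Finset.sum_congr rfl fun j _ => ?_
  by_cases hj : w j = 0
  · simp [hj]
  · rw [h j hj]

lemma weightedUtility_smul (r : ℝ) (w x : J → ℝ) :
    weightedUtility g (r • w) x = r * weightedUtility g w x := by
  rw [weightedUtility, weightedUtility, Finset.mul_sum]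
  exact Finset.sum_congr rfl fun j _ => by simp only [Pi.smul_apply, smul_eq_mul]; ring

lemma weightedUtility_smul_le_smul {r : ℝ} (hr : 0 ≤ r) {w x y : J → ℝ}
    (h : weightedUtility g w y ≤ weightedUtility g w x) :
    weightedUtility g (r • w) y ≤ weightedUtility g (r • w) x := by
  rw [weightedUtility_smul, weightedUtility_smul]
  exact mul_le_mul_of_nonneg_left h hr

lemma continuous_weightedUtility (hg : ∀ j, Continuous (g j)) (w : J → ℝ) :
    Continuous (weightedUtility g w) := by
  unfold weightedUtility
  fun_prop

lemma weightedUtility_midpoint_gt (hg : ∀ j, StrictConcaveOn ℝ (Ici 0) (g j)) {w : J → ℝ}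
    (hw : 0 ≤ w) {x y : J → ℝ} (hx : 0 ≤ x) (hy : 0 ≤ y) {j : J} (hxy : x j ≠ y j)
    (hwj : 0 < w j) :
    (weightedUtility g w x + weightedUtility g w y) / 2 <
      weightedUtility g w ((1 / 2 : ℝ) • x + (1 / 2 : ℝ) • y) := by
  have hhalf : (1 / 2 : ℝ) + 1 / 2 = 1 := by norm_num
  have hterm : ∀ i, (1 / 2 : ℝ) • g i (x i) + (1 / 2 : ℝ) • g i (y i) ≤
      g i ((1 / 2 : ℝ) • x i + (1 / 2 : ℝ) • y i) := fun i =>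
    (hg i).concaveOn.2 (hx i) (hy i) (by norm_num) (by norm_num) hhalf
  have hj : (1 / 2 : ℝ) • g j (x j) + (1 / 2 : ℝ) • g j (y j) <
      g j ((1 / 2 : ℝ) • x j + (1 / 2 : ℝ) • y j) :=
    (hg j).2 (hx j) (hy j) hxy (by norm_num) (by norm_num) hhalf
  calc (weightedUtility g w x + weightedUtility g w y) / 2
      = ∑ i, ((1 / 2 : ℝ) • g i (x i) + (1 / 2 : ℝ) • g i (y i)) * w i := by
        simp only [weightedUtility, smul_eq_mul, Finset.sum_div, ← Finset.sum_add_distrib]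
        exact Finset.sum_congr rfl fun i _ => by ring
    _ < ∑ i, g i ((1 / 2 : ℝ) • x i + (1 / 2 : ℝ) • y i) * w i :=
        Finset.sum_lt_sum (fun i _ => mul_le_mul_of_nonneg_right (hterm i) (hw i))
          ⟨j, Finset.mem_univ j, mul_lt_mul_of_pos_right hj hwj⟩
    _ = _ := rfl

lemma eq_of_isMaxOn_weightedUtility (hg : ∀ j, StrictConcaveOn ℝ (Ici 0) (g j)) {w : J → ℝ}
    (hw : 0 ≤ w) {K : Set (J → ℝ)} (hK : Convex ℝ K) (hK0 : ∀ x ∈ K, 0 ≤ x) {x y : J → ℝ}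
    (hx : x ∈ K) (hmax : IsMaxOn (weightedUtility g w) K x) (hy : y ∈ K)
    (hxy : weightedUtility g w x ≤ weightedUtility g w y) {j : J} (hwj : 0 < w j) :
    y j = x j := by
  by_contra hne
  have hmid : weightedUtility g w _ ≤ weightedUtility g w x := hmax (hK hx hy (by norm_num : (0 : ℝ) ≤ 1 / 2) (by norm_num : (0 : ℝ) ≤ 1 / 2)
    (by norm_num))
  have := weightedUtility_midpoint_gt hg hw (hK0 x hx) (hK0 y hy) (Ne.symm hne) hwj
  linarith

lemma tendsto_weightedUtility_sub {a b : ℝ} (hg : ∀ j, ContinuousOn (g j) (Icc a b))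
    {ι : Type*} {l : Filter ι} {W : ι → J → ℝ} {w : J → ℝ}
    (hW : ∀ j, Tendsto (fun i => W i j) l (𝓝 (w j))) {x : ι → J → ℝ}
    (hx : ∀ i j, x i j ∈ Icc a b) :
    Tendsto (fun i => weightedUtility g (W i) (x i) - weightedUtility g w (x i)) l (𝓝 0) := by
  simp only [weightedUtility, ← Finset.sum_sub_distrib, ← mul_sub]
  rw [← Finset.sum_const_zero (s := (Finset.univ : Finset J))]
  refine tendsto_finsetSum _ fun j _ => isBoundedUnder_le_mul_tendsto_zero ?_ ?_
  · obtain ⟨C, hC⟩ := isCompact_Icc.exists_bound_of_continuousOn (hg j)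
    exact isBoundedUnder_of ⟨C, fun i => hC _ (hx i j)⟩
  · simpa using (hW j).sub_const (w j)

lemma weightedUtility_le_add_of_le {W w x y x' y' : J → ℝ}
    (hWxy : weightedUtility g W y ≤ weightedUtility g W x) (hx : ∀ j, w j ≠ 0 → x j = x' j)
    (hy : ∀ j, w j ≠ 0 → y' j = y j) :
    weightedUtility g w y' ≤ weightedUtility g w x' +
      ((weightedUtility g W x - weightedUtility g w x) -
        (weightedUtility g W y - weightedUtility g w y)) := by
  rw [weightedUtility_congr hx, weightedUtility_congr hy] at *
  linarith

end WeightedUtility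

lemma IsCompact.tendsto_comp_of_almost_maximizing {E F : Type*} [TopologicalSpace E]
    [FirstCountableTopology E] [TopologicalSpace F] {K : Set E} (hK : IsCompact K)
    {Φ : E → ℝ} (hΦ : ContinuousOn Φ K) {ρ : E → F} (hρ : Continuous ρ) {x : E}
    (hx : ∀ y ∈ K, Φ x ≤ Φ y → ρ y = ρ x) {u : ℕ → E} (hu : ∀ n, u n ∈ K) {e : ℕ → ℝ}
    (he : Tendsto e atTop (𝓝 0)) (hue : ∀ᶠ n in atTop, Φ x ≤ Φ (u n) + e n) :
    Tendsto (ρ ∘ u) atTop (𝓝 (ρ x)) := by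
  refine tendsto_of_subseq_tendsto fun ns hns => ?_
  obtain ⟨v, hvK, φ, hφ, hv⟩ := hK.tendsto_subseq fun n => hu (ns n)
  have hsub : Tendsto (ns ∘ φ) atTop atTop := hns.comp hφ.tendsto_atTop
  have hΦv : Tendsto (fun n => Φ (u (ns (φ n))) + e (ns (φ n))) atTop (𝓝 (Φ v)) := by
    simpa using ((hΦ v hvK).tendsto.comp
      (tendsto_nhdsWithin_iff.2 ⟨hv, Eventually.of_forall fun n => hu _⟩)).add (he.comp hsub)
  have hv_max : Φ x ≤ Φ v := ge_of_tendsto hΦv (hsub.eventually hue)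
  exact ⟨φ, hx v hvK hv_max ▸ (hρ.tendsto v).comp hv⟩

theorem tendsto_apply_of_almost_maximizing {J : Type*} [Fintype J] {g : J → ℝ → ℝ}
    (hg_conc : ∀ j, StrictConcaveOn ℝ (Ici 0) (g j)) (hg_cont : ∀ j, Continuous (g j))
    {w : J → ℝ} (hw : 0 ≤ w) {K : Set (J → ℝ)} (hK : IsCompact K) (hKconv : Convex ℝ K)
    (hK0 : ∀ x ∈ K, 0 ≤ x) {x : J → ℝ} (hxK : x ∈ K)
    (hmax : IsMaxOn (weightedUtility g w) K x) {u : ℕ → J → ℝ}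
    (hu : ∀ n, u n ∈ K) {e : ℕ → ℝ} (he : Tendsto e atTop (𝓝 0))
    (hue : ∀ᶠ n in atTop, weightedUtility g w x ≤ weightedUtility g w (u n) + e n)
    {j : J} (hwj : 0 < w j) :
    Tendsto (fun n => u n j) atTop (𝓝 (x j)) :=
  hK.tendsto_comp_of_almost_maximizing (continuous_weightedUtility hg_cont w).continuousOn
    (continuous_apply j)
    (fun _ hy hxy => eq_of_isMaxOn_weightedUtility hg_conc hw hKconv hK0 hxK hmax hy hxy hwj)
    hu he hue

/-- Restricting to the coordinates in `A` is linear, so it commutes with convex hulls. -/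
lemma exists_mem_convexHull_image_eqOn {ι J : Type*} {f f' : ι → J → ℝ} {S : Set ι} {A : Set J}
    (h : ∀ i ∈ S, EqOn (f i) (f' i) A) {x : J → ℝ} (hx : x ∈ convexHull ℝ (f '' S)) :
    ∃ y ∈ convexHull ℝ (f' '' S), EqOn y x A := by
  let π : (J → ℝ) →ₗ[ℝ] (A → ℝ) := LinearMap.funLeft ℝ ℝ Subtype.val
  have himage : π '' (f '' S) = π '' (f' '' S) := by
    simp only [image_image]
    exact image_congr fun i hi => funext fun j => h i hi j.2
  have hπx : π x ∈ π '' convexHull ℝ (f' '' S) := by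
    rw [π.image_convexHull, ← himage, ← π.image_convexHull]
    exact mem_image_of_mem π hx
  obtain ⟨y, hy, hyx⟩ := hπx
  exact ⟨y, hy, fun j hj => congrFun hyx ⟨j, hj⟩⟩

lemma convexHull_image_subset_pi_Icc {ι J : Type*} {f : ι → J → ℝ} {S : Set ι} {a b : ℝ}
    (h : ∀ i ∈ S, ∀ j, f i j ∈ Icc a b) :
    convexHull ℝ (f '' S) ⊆ univ.pi fun _ => Icc a b :=
  convexHull_min (by rintro _ ⟨i, hi, rfl⟩ j -; exact h i hi j)
    (convex_pi fun _ _ => convex_Icc a b)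

section Schedules

variable {J : Type*} (S₀ : Finset (J → ℤ))

def scheduleHull : Set (J → ℝ) :=
  convexHull ℝ ((fun σ : J → ℤ => fun j => (σ j : ℝ)) '' (S₀ : Set (J → ℤ)))

/-- The paper's `⟨S₀ ∧ b⟩`. -/
def truncatedScheduleHull (b : J → ℝ) : Set (J → ℝ) :=
  convexHull ℝ ((fun σ : J → ℤ => fun j => min (σ j : ℝ) (b j)) '' (S₀ : Set (J → ℤ)))

lemma isCompact_scheduleHull : IsCompact (scheduleHull S₀) :=
  (S₀.finite_toSet.image _).isCompact_convexHull ℝ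

lemma convex_scheduleHull : Convex ℝ (scheduleHull S₀) :=
  convex_convexHull ℝ _

lemma exists_forall_le [Finite J] : ∃ M : ℝ, ∀ σ ∈ S₀, ∀ j, (σ j : ℝ) ≤ M := by
  obtain ⟨M, hM⟩ := Finite.exists_le fun p : S₀ × J => (p.1.1 p.2 : ℝ)
  exact ⟨M, fun σ hσ j => hM (⟨σ, hσ⟩, j)⟩

variable {S₀} {M : ℝ} (hM : ∀ σ ∈ S₀, ∀ j, (σ j : ℝ) ≤ M) {b : J → ℝ} {x : J → ℝ}
include hM

lemma exists_mem_scheduleHull_eqOn (hx : x ∈ truncatedScheduleHull S₀ b) :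
    ∃ y ∈ scheduleHull S₀, EqOn y x {j | M ≤ b j} :=
  exists_mem_convexHull_image_eqOn (A := {j | M ≤ b j})
    (fun σ hσ j hj => min_eq_left ((hM σ hσ j).trans hj)) hx

lemma exists_mem_truncatedScheduleHull_eqOn (hx : x ∈ scheduleHull S₀) :
    ∃ y ∈ truncatedScheduleHull S₀ b, EqOn y x {j | M ≤ b j} :=
  exists_mem_convexHull_image_eqOn (A := {j | M ≤ b j})
    (fun σ hσ j hj => (min_eq_left ((hM σ hσ j).trans hj)).symm) hx

variable (hnn : ∀ σ ∈ S₀, ∀ j, 0 ≤ σ j)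
include hnn

lemma scheduleHull_subset_pi_Icc : scheduleHull S₀ ⊆ univ.pi fun _ => Icc 0 M :=
  convexHull_image_subset_pi_Icc fun σ hσ j => ⟨by exact_mod_cast hnn σ hσ j, hM σ hσ j⟩

lemma truncatedScheduleHull_subset_pi_Icc (hb : 0 ≤ b) :
    truncatedScheduleHull S₀ b ⊆ univ.pi fun _ => Icc 0 M :=
  convexHull_image_subset_pi_Icc fun σ hσ j =>
    ⟨le_min (by exact_mod_cast hnn σ hσ j) (hb j), (min_le_left _ _).trans (hM σ hσ j)⟩

end Schedules

lemma eventually_ge_of_tendsto_div_natCast {a : ℕ → ℝ} {r : ℝ}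
    (ha : Tendsto (fun c : ℕ => a c / c) atTop (𝓝 r)) (hr : 0 < r) (M : ℝ) :
    ∀ᶠ c in atTop, M ≤ a c := by
  have h : Tendsto (fun c : ℕ => a c / c * c) atTop atTop :=
    ha.pos_mul_atTop hr tendsto_natCast_atTop_atTop
  filter_upwards [h.eventually_ge_atTop M, eventually_ne_atTop 0] with c hc hc0
  rwa [div_mul_cancel₀ _ (Nat.cast_ne_zero.2 hc0)] at hc

section QueueSequence

variable {J : Type*} {qc : ℕ → J → ℕ} {q : J → ℝ}
  (hconv : ∀ j, Tendsto (fun c : ℕ => (qc c j : ℝ) / c) atTop (𝓝 (q j)))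
include hconv

lemma nonneg_of_tendsto_div_natCast : 0 ≤ q :=
  fun j => ge_of_tendsto' (hconv j) fun c => by positivity

lemma eventually_forall_ge_of_rpow_ne_zero [Finite J] {α : ℝ} (hα : 0 < α) (M : ℝ) :
    ∀ᶠ c in atTop, ∀ j, q j ^ α ≠ 0 → M ≤ qc c j := by
  refine eventually_all.2 fun j => ?_
  rcases (nonneg_of_tendsto_div_natCast hconv j).lt_or_eq with hj | hj
  · exact (eventually_ge_of_tendsto_div_natCast (hconv j) hj M).mono fun c hc _ => hc
  · exact Eventually.of_forall fun c hne => by simp [← hj, hα.ne'] at hne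

lemma tendsto_inv_rpow_smul_rpow {α : ℝ} (hα : 0 ≤ α) (j : J) :
    Tendsto (fun c : ℕ => (((c : ℝ) ^ α)⁻¹ • fun i => (qc c i : ℝ) ^ α) j) atTop
      (𝓝 (q j ^ α)) := by
  refine ((Real.continuousAt_rpow_const _ _ (Or.inr hα)).tendsto.comp (hconv j)).congr
    fun c => ?_
  show ((qc c j : ℝ) / c) ^ α = ((c : ℝ) ^ α)⁻¹ * (qc c j : ℝ) ^ α
  rw [Real.div_rpow (by positivity) (by positivity), div_eq_inv_mul]

end QueueSequence

theorem stmt_15_general {J : Type*} [Fintype J]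
    (S₀ : Finset (J → ℤ)) (hnn : ∀ σ ∈ S₀, ∀ j, 0 ≤ σ j)
    (α : ℝ) (hα : 0 < α)
    (g : J → ℝ → ℝ) (hg_conc : ∀ j, StrictConcaveOn ℝ (Set.Ici (0:ℝ)) (g j))
    (hg_cont : ∀ j, Continuous (g j))
    (qc : ℕ → (J → ℕ))
    (q : J → ℝ)
    (hconv : ∀ j, Tendsto (fun c : ℕ => (qc c j : ℝ) / c) atTop (nhds (q j)))
    (σhat : ℕ → (J → ℝ))
    (hσhat_mem : ∀ c, σhat c ∈ convexHull ℝ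
      ((fun σ : J → ℤ => fun j => min (σ j : ℝ) (qc c j)) '' (S₀ : Set (J → ℤ))))
    (hσhat_max : ∀ c, ∀ s ∈ convexHull ℝ
        ((fun σ : J → ℤ => fun j => min (σ j : ℝ) (qc c j)) '' (S₀ : Set (J → ℤ))),
      ∑ j, g j (s j) * (qc c j : ℝ) ^ α ≤ ∑ j, g j (σhat c j) * (qc c j : ℝ) ^ α)
    (σstar : J → ℝ)
    (hσstar_mem : σstar ∈ convexHull ℝ
      ((fun σ : J → ℤ => fun j => (σ j : ℝ)) '' (S₀ : Set (J → ℤ))))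
    (hσstar_max : ∀ s ∈ convexHull ℝ
        ((fun σ : J → ℤ => fun j => (σ j : ℝ)) '' (S₀ : Set (J → ℤ))),
      ∑ j, g j (s j) * q j ^ α ≤ ∑ j, g j (σstar j) * q j ^ α) :
    ∀ j, 0 < q j → Tendsto (fun c : ℕ => σhat c j) atTop (nhds (σstar j)) := by
  intro j hj
  obtain ⟨M, hM⟩ := exists_forall_le S₀
  have hlarge := eventually_forall_ge_of_rpow_ne_zero hconv hα M
  choose u hu huσ using fun c => exists_mem_scheduleHull_eqOn hM (hσhat_mem c)
  choose t ht htσ using fun c =>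
    exists_mem_truncatedScheduleHull_eqOn hM (b := fun i => qc c i) hσstar_mem
  have hK0 : ∀ x ∈ scheduleHull S₀, 0 ≤ x := fun x hx i =>
    (scheduleHull_subset_pi_Icc hM hnn hx i trivial).1
  have hbox : ∀ c, ∀ x ∈ truncatedScheduleHull S₀ (fun i => qc c i), ∀ i, x i ∈ Icc 0 M :=
    fun c x hx i => truncatedScheduleHull_subset_pi_Icc hM hnn (fun i => by positivity) hx i trivial
  have hg_Icc i : ContinuousOn (g i) (Icc 0 M) := (hg_cont i).continuousOn
  have hW := tendsto_inv_rpow_smul_rpow hconv hα.le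
  have he := (tendsto_weightedUtility_sub hg_Icc hW fun c => hbox c _ (hσhat_mem c)).sub
    (tendsto_weightedUtility_sub hg_Icc hW fun c => hbox c _ (ht c))
  rw [sub_zero] at he
  have hue := hlarge.mono fun c hc => weightedUtility_le_add_of_le
    (weightedUtility_smul_le_smul (r := ((c : ℝ) ^ α)⁻¹) (by positivity)
      (hσhat_max c (t c) (ht c)))
    (fun i hi => (huσ c (hc i hi)).symm) (fun i hi => (htσ c (hc i hi)).symm)
  have hwj : 0 < q j ^ α := Real.rpow_pos_of_pos hj α
  have hu_lim : Tendsto (fun c => u c j) atTop (𝓝 (σstar j)) :=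
    tendsto_apply_of_almost_maximizing hg_conc hg_cont
      (fun i => Real.rpow_nonneg (nonneg_of_tendsto_div_natCast hconv i) α)
      (isCompact_scheduleHull S₀) (convex_scheduleHull S₀) hK0 hσstar_mem
      (isMaxOn_iff.2 hσstar_max) hu he hue hwj
  exact hu_lim.congr' (hlarge.mono fun c hc => huσ c (hc j hwj.ne'))

/-- maximizers over the queue-truncated schedule polytopes
converge, in every coordinate with positive fluid queue, to the unconstrained
maximizer. -/
theorem stmt_15 {J : Type*} [Fintype J]
    (S₀ : Finset (J → ℤ)) (h0 : (0 : J → ℤ) ∈ S₀) (hnn : ∀ σ ∈ S₀, ∀ j, 0 ≤ σ j)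
    (α : ℝ) (hα : 0 < α)
    (g : J → ℝ → ℝ) (hg_conc : ∀ j, StrictConcaveOn ℝ (Set.Ici (0:ℝ)) (g j))
    (hg_cont : ∀ j, Continuous (g j))
    (qc : ℕ → (J → ℕ)) (hqc : ∀ c, (∑ j, qc c j) = c)
    (q : J → ℝ)
    (hconv : ∀ j, Tendsto (fun c : ℕ => (qc c j : ℝ) / c) atTop (nhds (q j)))
    (σhat : ℕ → (J → ℝ))
    (hσhat_mem : ∀ c, σhat c ∈ convexHull ℝ
      ((fun σ : J → ℤ => fun j => min (σ j : ℝ) (qc c j)) '' (S₀ : Set (J → ℤ))))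
    (hσhat_max : ∀ c, ∀ s ∈ convexHull ℝ
        ((fun σ : J → ℤ => fun j => min (σ j : ℝ) (qc c j)) '' (S₀ : Set (J → ℤ))),
      ∑ j, g j (s j) * (qc c j : ℝ) ^ α ≤ ∑ j, g j (σhat c j) * (qc c j : ℝ) ^ α)
    (σstar : J → ℝ)
    (hσstar_mem : σstar ∈ convexHull ℝ
      ((fun σ : J → ℤ => fun j => (σ j : ℝ)) '' (S₀ : Set (J → ℤ))))
    (hσstar_max : ∀ s ∈ convexHull ℝ
        ((fun σ : J → ℤ => fun j => (σ j : ℝ)) '' (S₀ : Set (J → ℤ))),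
      ∑ j, g j (s j) * q j ^ α ≤ ∑ j, g j (σstar j) * q j ^ α) :
    ∀ j, 0 < q j → Tendsto (fun c : ℕ => σhat c j) atTop (nhds (σstar j)) :=
  stmt_15_general S₀ hnn α hα g hg_conc hg_cont qc q hconv σhat hσhat_mem hσhat_max σstar hσstar_mem
    hσstar_max
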